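/- The octahedral graph O_3 (the complete tripartite graph K_{2,2,2}) is not a Helly B_1-EPG graph: in every EPG representation of O_3 in which each path has at most one bend, there exist three pairwise edge-intersecting paths with no grid edge common to all three. -/

import Mathlib

/-- A grid edge: a lattice point together with a direction; `true` means the
horizontal edge from `pt` to `pt + (1,0)`, `false` the vertical edge from `pt`
to `pt + (0,1)`. -/
structure GridEdge where
  pt : ℤ × ℤ
  horiz : Bool
deriving DecidableEq

/-- The two endpoints of a grid edge. -/
def GridEdge.endpoints (e : GridEdge) : Finset (ℤ × ℤ) :=
  {e.pt, if e.horiz then (e.pt.1 + 1, e.pt.2) else (e.pt.1, e.pt.2 + 1)}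

/-- Two distinct grid edges are adjacent when they share an endpoint. -/
def GridEdge.adj (e f : GridEdge) : Prop :=
  e ≠ f ∧ (e.endpoints ∩ f.endpoints).Nonempty

/-- A simple path in the integer grid, given by its sequence of edges:
consecutive edges are adjacent, all edges are distinct, and
non-consecutive edges are non-adjacent. -/
structure GridPath where
  edges : List GridEdge
  nonempty : edges ≠ []
  nodup : edges.Nodup
  chain : edges.Chain' GridEdge.adj
  simple : ∀ i j : ℕ, i + 1 < j → ∀ (hi : i < edges.length) (hj : j < edges.length),
    ¬ GridEdge.adj (edges.get ⟨i, hi⟩) (edges.get ⟨j, hj⟩)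

/-- The number of bends of a grid path: consecutive pairs of edges with
different directions. -/
def GridPath.bends (P : GridPath) : ℕ :=
  ((P.edges.zip P.edges.tail).filter fun q => q.1.horiz != q.2.horiz).length

namespace GE
/-- position along the line of the edge -/
def along (e : GridEdge) : ℤ := if e.horiz then e.pt.1 else e.pt.2
/-- which line the edge is on -/
def cross (e : GridEdge) : ℤ := if e.horiz then e.pt.2 else e.pt.1
/-- build an edge from direction, along, cross -/
def mkE (d : Bool) (a c : ℤ) : GridEdge := ⟨if d then (a, c) else (c, a), d⟩

@[simp] lemma mkE_horiz (d : Bool) (a c : ℤ) : (mkE d a c).horiz = d := rfl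
@[simp] lemma mkE_along (d : Bool) (a c : ℤ) : along (mkE d a c) = a := by
  cases d <;> simp [mkE, along]
@[simp] lemma mkE_cross (d : Bool) (a c : ℤ) : cross (mkE d a c) = c := by
  cases d <;> simp [mkE, cross]

lemma ext_edge {e f : GridEdge} (h1 : e.horiz = f.horiz) (h2 : along e = along f)
    (h3 : cross e = cross f) : e = f := by
  rcases e with ⟨⟨x, y⟩, d⟩; rcases f with ⟨⟨x', y'⟩, d'⟩
  cases d <;> cases d' <;> simp_all [along, cross]

lemma adj_symm {e f : GridEdge} (h : GridEdge.adj e f) : GridEdge.adj f e := by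
  refine ⟨Ne.symm h.1, ?_⟩
  rw [Finset.inter_comm]; exact h.2

lemma R1 {e f : GridEdge} (hd : e.horiz = f.horiz) (h : GridEdge.adj e f) :
    cross e = cross f ∧ (along f = along e + 1 ∨ along e = along f + 1) := by
  obtain ⟨hne, ⟨p, hp⟩⟩ := h
  rw [Finset.mem_inter] at hp
  obtain ⟨hp1, hp2⟩ := hp
  rcases e with ⟨⟨x, y⟩, d⟩; rcases f with ⟨⟨x', y'⟩, d'⟩
  cases d <;> cases d' <;> simp_all [GridEdge.endpoints, along, cross, Prod.ext_iff] <;>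
    [skip; skip] <;> rcases hp1 with ⟨h1, h2⟩ | ⟨h1, h2⟩ <;>
    rcases hp2 with ⟨h3, h4⟩ | ⟨h3, h4⟩ <;> omega

lemma R2 {e f : GridEdge} (hd : e.horiz = true) (hd' : f.horiz = false)
    (h : GridEdge.adj e f) :
    (along e = cross f - 1 ∨ along e = cross f) ∧
    (along f = cross e - 1 ∨ along f = cross e) := by
  obtain ⟨hne, ⟨p, hp⟩⟩ := h
  rw [Finset.mem_inter] at hp
  obtain ⟨hp1, hp2⟩ := hp
  rcases e with ⟨⟨x, y⟩, d⟩; rcases f with ⟨⟨x', y'⟩, d'⟩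
  subst hd hd'
  simp_all [GridEdge.endpoints, along, cross, Prod.ext_iff]
  rcases hp1 with ⟨h1, h2⟩ | ⟨h1, h2⟩ <;> rcases hp2 with ⟨h3, h4⟩ | ⟨h3, h4⟩ <;> omega

lemma R2' {e f : GridEdge} (hd : e.horiz ≠ f.horiz) (h : GridEdge.adj e f) :
    (along e = cross f - 1 ∨ along e = cross f) ∧
    (along f = cross e - 1 ∨ along f = cross e) := by
  cases he : e.horiz
  · cases hf : f.horiz
    · rw [he, hf] at hd; exact absurd rfl hd
    · exact ⟨(R2 hf he (adj_symm h)).2, (R2 hf he (adj_symm h)).1⟩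
  · cases hf : f.horiz
    · exact R2 he hf h
    · rw [he, hf] at hd; exact absurd rfl hd

lemma R3 {e f : GridEdge} (hd : e.horiz ≠ f.horiz)
    (h1 : along e = cross f - 1 ∨ along e = cross f)
    (h2 : along f = cross e - 1 ∨ along f = cross e) : GridEdge.adj e f := by
  have hne : e ≠ f := fun h => hd (by rw [h])
  refine ⟨hne, ?_⟩
  rcases e with ⟨⟨x, y⟩, d⟩; rcases f with ⟨⟨x', y'⟩, d'⟩
  cases d <;> cases d' <;> simp only [along, cross] at h1 h2 hd <;> simp at h1 h2
  · exact absurd rfl hd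
  · -- e vertical, f horizontal : shared point (x, y')
    refine ⟨(x, y'), Finset.mem_inter.mpr ⟨?_, ?_⟩⟩ <;>
      simp [GridEdge.endpoints, Prod.ext_iff] <;> omega
  · -- e horizontal, f vertical : shared point (x', y)
    refine ⟨(x', y), Finset.mem_inter.mpr ⟨?_, ?_⟩⟩ <;>
      simp [GridEdge.endpoints, Prod.ext_iff] <;> omega
  · exact absurd rfl hd

end GE

namespace GE

/-- count of direction changes -/
def bcount (l : List GridEdge) : ℕ :=
  ((l.zip l.tail).filter fun q => q.1.horiz != q.2.horiz).length

lemma bcount_cons (a a' : GridEdge) (l : List GridEdge) :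
    bcount (a :: a' :: l) =
      (if a.horiz != a'.horiz then 1 else 0) + bcount (a' :: l) := by
  simp only [bcount, List.tail_cons, List.zip_cons_cons, List.filter_cons]
  cases h : (a.horiz != a'.horiz) <;> simp [h] <;> omega

lemma bcount_zero : ∀ (l : List GridEdge), bcount l = 0 →
    ∀ e ∈ l, ∀ f ∈ l, e.horiz = f.horiz := by
  intro l
  induction l with
  | nil => intro _ e he; simp at he
  | cons a l ih =>
    intro h e he f hf
    match l with
    | [] => simp_all
    | a' :: l' =>
      rw [bcount_cons] at h
      have h1 : a.horiz = a'.horiz := by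
        by_contra hc
        simp [bne_iff_ne, hc] at h
      have h2 := ih (by omega)
      rcases List.mem_cons.mp he with rfl | he' <;>
        rcases List.mem_cons.mp hf with rfl | hf'
      · rfl
      · rw [h1]; exact h2 a' (by simp) f hf'
      · rw [h1]; exact h2 e he' a' (by simp)
      · exact h2 e he' f hf'

lemma bsplit : ∀ (l : List GridEdge), bcount l ≤ 1 →
    ∃ (l1 l2 : List GridEdge) (b : Bool), l = l1 ++ l2 ∧
      (∀ e ∈ l1, e.horiz = b) ∧ (∀ e ∈ l2, e.horiz = !b) := by
  intro l
  induction l with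
  | nil => exact fun _ => ⟨[], [], true, rfl, by simp, by simp⟩
  | cons a l ih =>
    intro h
    match l with
    | [] => exact ⟨[a], [], a.horiz, rfl, by simp, by simp⟩
    | a' :: l' =>
      rw [bcount_cons] at h
      by_cases hc : a.horiz = a'.horiz
      · obtain ⟨l1, l2, b, hl, h1, h2⟩ := ih (by simp [hc] at h; omega)
        match l1 with
        | [] =>
          simp only [List.nil_append] at hl
          refine ⟨a :: (a' :: l'), [], a.horiz, by simp, ?_, by simp⟩
          intro e he
          rcases List.mem_cons.mp he with rfl | he'
          · rfl
          · have : e.horiz = !b := h2 e (by rw [← hl]; exact he')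
            have ha' : a'.horiz = !b := h2 a' (by rw [← hl]; simp)
            rw [this, ← ha', ← hc]
        | x :: r =>
          have hx : x = a' := by
            have := hl; simp at this; exact this.1.symm
          refine ⟨a :: (x :: r), l2, b, by simp [hl], ?_, h2⟩
          intro e he
          rcases List.mem_cons.mp he with rfl | he'
          · rw [hc, ← hx]; exact h1 x (by simp)
          · exact h1 e he'
      · have h0 : bcount (a' :: l') = 0 := by simp [bne_iff_ne, hc] at h; omega
        refine ⟨[a], a' :: l', a.horiz, by simp, by simp, ?_⟩
        intro e he
        have := bcount_zero _ h0 e he a' (by simp)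
        rw [this]
        cases ha : a.horiz <;> cases ha' : a'.horiz <;> simp_all

/-- all edges on a same-direction chain share the `cross` coordinate -/
lemma runcross : ∀ (l : List GridEdge), l.Chain' GridEdge.adj →
    (∀ e ∈ l, ∀ f ∈ l, e.horiz = f.horiz) →
    ∀ e ∈ l, ∀ f ∈ l, cross e = cross f := by
  intro l
  induction l with
  | nil => intro _ _ e he; simp at he
  | cons a l ih =>
    intro hch hd e he f hf
    have hch' := hch.tail
    have hd' : ∀ e ∈ l, ∀ f ∈ l, e.horiz = f.horiz := fun e he f hf =>
      hd e (by simp [he]) f (by simp [hf])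
    have key : ∀ e ∈ l, cross e = cross a := by
      intro e he
      match l with
      | [] => simp at he
      | b :: l' =>
        have hab : GridEdge.adj a b := (List.isChain_cons.mp hch).1 b rfl
        have h1 : cross a = cross b :=
          (R1 (hd a (by simp) b (by simp)) hab).1
        rcases List.mem_cons.mp he with rfl | he'
        · exact h1.symm
        · rw [ih hch' hd' e (by simp [he']) b (by simp), ← h1]
    rcases List.mem_cons.mp he with rfl | he' <;>
      rcases List.mem_cons.mp hf with rfl | hf'
    · rfl
    · exact (key f hf').symm
    · exact key e he'
    · exact ih hch' hd' e he' f hf'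

end GE

namespace GE

def Up (l : List GridEdge) : Prop := l.Chain' (fun e f => along f = along e + 1)
def Down (l : List GridEdge) : Prop := l.Chain' (fun e f => along e = along f + 1)

lemma updown : ∀ (l : List GridEdge), l.Chain' GridEdge.adj → l.Nodup →
    (∀ e ∈ l, ∀ f ∈ l, e.horiz = f.horiz) → Up l ∨ Down l := by
  intro l
  induction l with
  | nil => intro _ _ _; left; exact List.isChain_nil
  | cons a l ih =>
    intro hch hnd hd
    match l with
    | [] => left; simp [Up, List.Chain']
    | b :: t =>
      have hab : GridEdge.adj a b := (List.isChain_cons.mp hch).1 b rfl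
      have hcr := runcross _ hch hd
      have h1 := R1 (hd a (by simp) b (by simp)) hab
      rcases ih hch.tail hnd.of_cons
        (fun e he f hf => hd e (by simp [he]) f (by simp [hf])) with hup | hdn
      · rcases h1.2 with hstep | hstep
        · left; exact List.isChain_cons.mpr ⟨fun y hy => by
            rw [List.head?_cons, Option.mem_some_iff] at hy; rw [← hy]; exact hstep, hup⟩
        · -- along a = along b + 1 : need t = [] else contradiction
          match t with
          | [] => right
                  exact List.isChain_cons.mpr ⟨fun y hy => by
                    rw [List.head?_cons, Option.mem_some_iff] at hy
                    rw [← hy]; exact hstep, List.isChain_singleton _⟩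
          | c :: t' =>
            exfalso
            have hbc : along c = along b + 1 := (List.isChain_cons_cons.mp hup).1
            have : c = a := ext_edge (hd c (by simp) a (by simp))
              (by omega) (hcr c (by simp) a (by simp))
            have : a ∈ b :: c :: t' := by rw [← this]; simp
            exact (List.nodup_cons.mp hnd).1 this
      · rcases h1.2 with hstep | hstep
        · -- along b = along a + 1 but tail is Down
          match t with
          | [] => left
                  exact List.isChain_cons.mpr ⟨fun y hy => by
                    rw [List.head?_cons, Option.mem_some_iff] at hy
                    rw [← hy]; exact hstep, List.isChain_singleton _⟩
          | c :: t' =>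
            exfalso
            have hbc : along b = along c + 1 := (List.isChain_cons_cons.mp hdn).1
            have : c = a := ext_edge (hd c (by simp) a (by simp))
              (by omega) (hcr c (by simp) a (by simp))
            have : a ∈ b :: c :: t' := by rw [← this]; simp
            exact (List.nodup_cons.mp hnd).1 this
        · right; exact List.isChain_cons.mpr ⟨fun y hy => by
            rw [List.head?_cons, Option.mem_some_iff] at hy; rw [← hy]; exact hstep, hdn⟩

lemma up_head_le : ∀ (a : GridEdge) (l : List GridEdge), Up (a :: l) →
    ∀ e ∈ a :: l, along a ≤ along e := by
  intro a l
  induction l generalizing a with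
  | nil => intro _ e he; simp at he; rw [he]
  | cons b t ih =>
    intro hup e he
    have hab : along b = along a + 1 := (List.isChain_cons_cons.mp hup).1
    rcases List.mem_cons.mp he with rfl | he'
    · exact le_refl _
    · have := ih b (List.isChain_cons_cons.mp hup).2 e he'
      omega

lemma down_head_ge : ∀ (a : GridEdge) (l : List GridEdge), Down (a :: l) →
    ∀ e ∈ a :: l, along e ≤ along a := by
  intro a l
  induction l generalizing a with
  | nil => intro _ e he; simp at he; rw [he]
  | cons b t ih =>
    intro hdn e he
    have hab : along a = along b + 1 := (List.isChain_cons_cons.mp hdn).1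
    rcases List.mem_cons.mp he with rfl | he'
    · exact le_refl _
    · have := ih b (List.isChain_cons_cons.mp hdn).2 e he'
      omega

lemma upattain : ∀ (l : List GridEdge), Up l → ∀ e ∈ l, ∀ f ∈ l, ∀ z : ℤ,
    along e ≤ z → z ≤ along f → ∃ g ∈ l, along g = z := by
  intro l
  induction l with
  | nil => intro _ e he; simp at he
  | cons a t ih =>
    intro hup e he f hf z hez hzf
    rcases List.mem_cons.mp he with rfl | he'
    · rcases eq_or_lt_of_le hez with heq | hlt
      · exact ⟨e, by simp, heq⟩
      · rcases List.mem_cons.mp hf with rfl | hf'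
        · exact ⟨f, by simp, by omega⟩
        · match t with
          | [] => simp at hf'
          | b :: t' =>
            have hab : along b = along e + 1 := (List.isChain_cons_cons.mp hup).1
            exact (ih (List.isChain_cons_cons.mp hup).2 b (by simp) f hf' z (by omega) hzf).imp
              (fun g ⟨hg, hgz⟩ => ⟨by simp [hg], hgz⟩)
    · rcases List.mem_cons.mp hf with rfl | hf'
      · have := up_head_le f t hup e (by simp [he'])
        exact ⟨f, by simp, by omega⟩
      · exact (ih (List.isChain_cons.mp hup).2 e he' f hf' z hez hzf).imp
          (fun g ⟨hg, hgz⟩ => ⟨by simp [hg], hgz⟩)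

lemma downattain : ∀ (l : List GridEdge), Down l → ∀ e ∈ l, ∀ f ∈ l, ∀ z : ℤ,
    along e ≤ z → z ≤ along f → ∃ g ∈ l, along g = z := by
  intro l
  induction l with
  | nil => intro _ e he; simp at he
  | cons a t ih =>
    intro hdn e he f hf z hez hzf
    rcases List.mem_cons.mp hf with rfl | hf'
    · rcases eq_or_lt_of_le hzf with heq | hlt
      · exact ⟨f, by simp, heq.symm⟩
      · rcases List.mem_cons.mp he with rfl | he'
        · exact ⟨e, by simp, by omega⟩
        · match t with
          | [] => simp at he'
          | b :: t' =>
            have hab : along f = along b + 1 := (List.isChain_cons_cons.mp hdn).1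
            exact (ih (List.isChain_cons_cons.mp hdn).2 e he' b (by simp) z hez (by omega)).imp
              (fun g ⟨hg, hgz⟩ => ⟨by simp [hg], hgz⟩)
    · rcases List.mem_cons.mp he with rfl | he'
      · have := down_head_ge e t hdn f (by simp [hf'])
        exact ⟨e, by simp, by omega⟩
      · exact (ih (List.isChain_cons.mp hdn).2 e he' f hf' z hez hzf).imp
          (fun g ⟨hg, hgz⟩ => ⟨by simp [hg], hgz⟩)

lemma betweenattain (l : List GridEdge) (hch : l.Chain' GridEdge.adj) (hnd : l.Nodup)
    (hd : ∀ e ∈ l, ∀ f ∈ l, e.horiz = f.horiz) :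
    ∀ e ∈ l, ∀ f ∈ l, ∀ z : ℤ, along e ≤ z → z ≤ along f → ∃ g ∈ l, along g = z := by
  rcases updown l hch hnd hd with h | h
  · exact upattain l h
  · exact downattain l h

end GE

namespace GE

def Sim (L : List GridEdge) : Prop :=
  ∀ i j : ℕ, i + 1 < j → ∀ (hi : i < L.length) (hj : j < L.length),
    ¬ GridEdge.adj (L.get ⟨i, hi⟩) (L.get ⟨j, hj⟩)

lemma Sim_reverse {L : List GridEdge} (h : Sim L) : Sim L.reverse := by
  intro i j hij hi hj
  rw [List.length_reverse] at hi hj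
  intro hadj
  rw [List.get_eq_getElem, List.get_eq_getElem, List.getElem_reverse,
    List.getElem_reverse] at hadj
  refine h (L.length - 1 - j) (L.length - 1 - i) (by omega) (by omega) (by omega) ?_
  rw [List.get_eq_getElem, List.get_eq_getElem]
  exact adj_symm hadj

lemma sim_apply (L1 L2 : List GridEdge) (hsim : Sim (L1 ++ L2)) (hL1 : L1 ≠ [])
    (hL2 : L2 ≠ []) (e' : GridEdge) (he' : e' ∈ L1) (hne : e' ≠ L1.getLast hL1) :
    ¬ GridEdge.adj e' (L2.head hL2) := by
  obtain ⟨⟨i, hi⟩, hig⟩ := List.mem_iff_get.mp he'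
  have hlen : 1 ≤ L2.length := List.length_pos_iff.mpr hL2
  have hne' : i ≠ L1.length - 1 := by
    intro hc
    apply hne
    subst hc
    rw [← hig]
    simp [List.get_eq_getElem, List.getLast_eq_getElem]
  have h1 : i < L1.length := hi
  have hj : L1.length < (L1 ++ L2).length := by
    rw [List.length_append]; omega
  have := hsim i L1.length (by omega) (by rw [List.length_append]; omega) hj
  rw [List.get_eq_getElem, List.get_eq_getElem, List.getElem_append_left hi,
    List.getElem_append_right (le_refl _)] at this
  simp only [Nat.sub_self] at this
  rw [← List.head_eq_getElem hL2] at this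
  rw [List.get_eq_getElem] at hig
  rw [← hig]
  exact this

lemma S3core (L1 L2 : List GridEdge) (d : Bool) (hnd : (L1 ++ L2).Nodup)
    (hch : (L1 ++ L2).Chain' GridEdge.adj) (hsim : Sim (L1 ++ L2))
    (h1 : ∀ e ∈ L1, e.horiz = d) (h2 : ∀ e ∈ L2, e.horiz = !d)
    (hL1 : L1 ≠ []) (hL2 : L2 ≠ []) (γ : ℤ) (hγ : ∀ f ∈ L2, cross f = γ) :
    ((∀ g ∈ L1, γ ≤ along g) ∧ ∃ c ∈ L1, along c = γ) ∨
    ((∀ g ∈ L1, along g ≤ γ - 1) ∧ ∃ c ∈ L1, along c = γ - 1) := by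
  set jn := L1.getLast hL1 with hjn
  set f0 := L2.head hL2 with hf0
  have hjnm : jn ∈ L1 := List.getLast_mem hL1
  have hf0m : f0 ∈ L2 := List.head_mem hL2
  have hjd : jn.horiz = d := h1 jn hjnm
  have hf0d : f0.horiz = !d := h2 f0 hf0m
  have hdd : jn.horiz ≠ f0.horiz := by rw [hjd, hf0d]; cases d <;> simp
  have hadj : GridEdge.adj jn f0 := by
    have := (List.isChain_append.mp hch).2.2
    exact this jn (by rw [List.getLast?_eq_getLast hL1]; exact Option.mem_def.mpr rfl) f0
      (by rw [List.head?_eq_head hL2]; exact Option.mem_def.mpr rfl)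
  have hR2 := R2' hdd hadj
  have hcf0 : cross f0 = γ := hγ f0 hf0m
  have hch1 : L1.Chain' GridEdge.adj := (List.isChain_append.mp hch).1
  have hnd1 : L1.Nodup := hnd.of_append_left
  have hd1 : ∀ e ∈ L1, ∀ f ∈ L1, e.horiz = f.horiz := by
    intro e he f hf; rw [h1 e he, h1 f hf]
  have hcr1 := runcross L1 hch1 hd1
  -- auxiliary: no edge of L1 other than jn can have along in {γ-1, γ}
  have haux : ∀ e' ∈ L1, e' ≠ jn → along e' ≠ γ - 1 ∧ along e' ≠ γ := by
    intro e' he' hne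
    have hnadj := sim_apply L1 L2 hsim hL1 hL2 e' he' hne
    constructor <;> intro hc <;> apply hnadj <;>
      refine R3 (by rw [h1 e' he', hf0d]; cases d <;> simp) ?_ ?_
    · left; rw [hcf0]; exact hc
    · have : cross e' = cross jn := hcr1 e' he' jn hjnm
      rw [this]; exact hR2.2
    · right; rw [hcf0]; exact hc
    · have : cross e' = cross jn := hcr1 e' he' jn hjnm
      rw [this]; exact hR2.2
  rcases hR2.1 with hjl | hjl
  · -- along jn = γ - 1 : all of L1 is ≤ γ - 1
    right
    refine ⟨?_, jn, hjnm, by rw [hjl, hcf0]⟩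
    intro g hg
    by_contra hlt
    push_neg at hlt
    obtain ⟨e', he', hez⟩ := betweenattain L1 hch1 hnd1 hd1 jn hjnm g hg γ
      (by omega) (by omega)
    have : e' ≠ jn := fun hc => by rw [hc, hjl, hcf0] at hez; omega
    exact (haux e' he' this).2 hez
  · -- along jn = γ : all of L1 is ≥ γ
    left
    refine ⟨?_, jn, hjnm, by rw [hjl, hcf0]⟩
    intro g hg
    by_contra hlt
    push_neg at hlt
    obtain ⟨e', he', hez⟩ := betweenattain L1 hch1 hnd1 hd1 g hg jn hjnm (γ - 1)
      (by omega) (by omega)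
    have : e' ≠ jn := fun hc => by rw [hc, hjl, hcf0] at hez; omega
    exact (haux e' he' this).1 hez

end GE

namespace GE

lemma path_split (Q : GridPath) (hb : Q.bends ≤ 1) :
    ∃ (L1 L2 : List GridEdge) (b : Bool), Q.edges = L1 ++ L2 ∧
      (∀ e ∈ L1, e.horiz = b) ∧ (∀ e ∈ L2, e.horiz = !b) :=
  bsplit Q.edges hb

lemma S1 (Q : GridPath) (hb : Q.bends ≤ 1) {e f : GridEdge} (he : e ∈ Q.edges)
    (hf : f ∈ Q.edges) (hd : e.horiz = f.horiz) : cross e = cross f := by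
  obtain ⟨L1, L2, b, hQ, h1, h2⟩ := path_split Q hb
  rw [hQ] at he hf
  have hch := Q.chain
  rw [hQ] at hch
  have hc1 := (List.isChain_append.mp hch).1
  have hc2 := (List.isChain_append.mp hch).2.1
  rcases List.mem_append.mp he with he1 | he2 <;>
    rcases List.mem_append.mp hf with hf1 | hf2
  · exact runcross L1 hc1 (fun x hx y hy => by rw [h1 x hx, h1 y hy]) e he1 f hf1
  · exfalso; have hb1 := h1 e he1; have hb2 := h2 f hf2
    rw [hb1, hb2] at hd; cases b <;> simp_all
  · exfalso; have hb1 := h2 e he2; have hb2 := h1 f hf1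
    rw [hb1, hb2] at hd; cases b <;> simp_all
  · exact runcross L2 hc2 (fun x hx y hy => by rw [h2 x hx, h2 y hy]) e he2 f hf2

lemma S2 (Q : GridPath) (hb : Q.bends ≤ 1) {e f : GridEdge} (he : e ∈ Q.edges)
    (hf : f ∈ Q.edges) (hd : e.horiz = f.horiz) {z : ℤ} (hz1 : along e ≤ z)
    (hz2 : z ≤ along f) : mkE e.horiz z (cross e) ∈ Q.edges := by
  obtain ⟨L1, L2, b, hQ, h1, h2⟩ := path_split Q hb
  rw [hQ] at he hf ⊢
  have hch := Q.chain
  have hnd := Q.nodup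
  rw [hQ] at hch hnd
  have hc1 := (List.isChain_append.mp hch).1
  have hc2 := (List.isChain_append.mp hch).2.1
  rcases List.mem_append.mp he with he1 | he2 <;>
    rcases List.mem_append.mp hf with hf1 | hf2
  · have hdd : ∀ x ∈ L1, ∀ y ∈ L1, x.horiz = y.horiz :=
      fun x hx y hy => by rw [h1 x hx, h1 y hy]
    obtain ⟨g, hg, hgz⟩ := betweenattain L1 hc1 hnd.of_append_left hdd e he1 f hf1 z hz1 hz2
    have : g = mkE e.horiz z (cross e) := ext_edge
      (by rw [mkE_horiz, h1 g hg, h1 e he1]) (by rw [hgz, mkE_along])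
      (by rw [mkE_cross]; exact runcross L1 hc1 hdd g hg e he1)
    rw [← this]; exact List.mem_append.mpr (Or.inl hg)
  · exfalso; have hb1 := h1 e he1; have hb2 := h2 f hf2
    rw [hb1, hb2] at hd; cases b <;> simp_all
  · exfalso; have hb1 := h2 e he2; have hb2 := h1 f hf1
    rw [hb1, hb2] at hd; cases b <;> simp_all
  · have hdd : ∀ x ∈ L2, ∀ y ∈ L2, x.horiz = y.horiz :=
      fun x hx y hy => by rw [h2 x hx, h2 y hy]
    obtain ⟨g, hg, hgz⟩ := betweenattain L2 hc2 (List.Nodup.of_append_right hnd) hdd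
      e he2 f hf2 z hz1 hz2
    have : g = mkE e.horiz z (cross e) := ext_edge
      (by rw [mkE_horiz, h2 g hg, h2 e he2]) (by rw [hgz, mkE_along])
      (by rw [mkE_cross]; exact runcross L2 hc2 hdd g hg e he2)
    rw [← this]; exact List.mem_append.mpr (Or.inr hg)

lemma S3 (Q : GridPath) (hb : Q.bends ≤ 1) {e f : GridEdge} (he : e ∈ Q.edges)
    (hf : f ∈ Q.edges) (hdir : f.horiz = !e.horiz) :
    ((∀ g ∈ Q.edges, g.horiz = e.horiz → cross f ≤ along g) ∧
      mkE e.horiz (cross f) (cross e) ∈ Q.edges) ∨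
    ((∀ g ∈ Q.edges, g.horiz = e.horiz → along g ≤ cross f - 1) ∧
      mkE e.horiz (cross f - 1) (cross e) ∈ Q.edges) := by
  obtain ⟨L1, L2, b, hQ, h1, h2⟩ := path_split Q hb
  have hch := Q.chain
  have hnd := Q.nodup
  have hsim : Sim Q.edges := Q.simple
  rw [hQ] at hch hnd hsim
  have hef : e.horiz ≠ f.horiz := by rw [hdir]; cases e.horiz <;> simp
  rcases List.mem_append.mp (by rw [← hQ]; exact he) with he1 | he2
  · -- e in the first run, which has direction e.horiz
    have hbd : b = e.horiz := (h1 e he1).symm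
    have hf2 : f ∈ L2 := by
      rcases List.mem_append.mp (by rw [← hQ]; exact hf) with hf1 | hf2
      · exact absurd ((h1 f hf1).trans hbd) (Ne.symm hef)
      · exact hf2
    have hL1 : L1 ≠ [] := List.ne_nil_of_mem he1
    have hL2 : L2 ≠ [] := List.ne_nil_of_mem hf2
    have hdd2 : ∀ x ∈ L2, ∀ y ∈ L2, x.horiz = y.horiz :=
      fun x hx y hy => by rw [h2 x hx, h2 y hy]
    have hγ : ∀ f' ∈ L2, cross f' = cross f :=
      fun f' hf' => runcross L2 (List.isChain_append.mp hch).2.1 hdd2 f' hf' f hf2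
    have hrun : ∀ x ∈ L1, x.horiz = e.horiz := fun x hx => (h1 x hx).trans hbd
    have hrun2 : ∀ x ∈ L2, x.horiz = !e.horiz := fun x hx => by rw [h2 x hx, hbd]
    have hcore := S3core L1 L2 e.horiz hnd hch hsim hrun hrun2 hL1 hL2 (cross f) hγ
    have hmem : ∀ g ∈ Q.edges, g.horiz = e.horiz → g ∈ L1 := by
      intro g hg hgd
      rcases List.mem_append.mp (by rw [← hQ]; exact hg) with h | h
      · exact h
      · exfalso; have h' := hrun2 g h; rw [hgd] at h'; exact absurd h' (by cases e.horiz <;> simp)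
    have hcr1 := runcross L1 (List.isChain_append.mp hch).1
      (fun x hx y hy => by rw [h1 x hx, h1 y hy])
    rcases hcore with ⟨hside, c, hc, hcγ⟩ | ⟨hside, c, hc, hcγ⟩
    · left
      refine ⟨fun g hg hgd => hside g (hmem g hg hgd), ?_⟩
      have : c = mkE e.horiz (cross f) (cross e) := ext_edge
        (by rw [mkE_horiz]; exact hrun c hc) (by rw [hcγ, mkE_along])
        (by rw [mkE_cross]; exact hcr1 c hc e he1)
      rw [← this, hQ]; exact List.mem_append.mpr (Or.inl hc)
    · right
      refine ⟨fun g hg hgd => hside g (hmem g hg hgd), ?_⟩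
      have : c = mkE e.horiz (cross f - 1) (cross e) := ext_edge
        (by rw [mkE_horiz]; exact hrun c hc) (by rw [hcγ, mkE_along])
        (by rw [mkE_cross]; exact hcr1 c hc e he1)
      rw [← this, hQ]; exact List.mem_append.mpr (Or.inl hc)
  · -- e in the second run: use the reversed list
    have hbd : b = !e.horiz := by
      have h' := h2 e he2; rw [← Bool.not_not b, ← h']
    have hf1 : f ∈ L1 := by
      rcases List.mem_append.mp (by rw [← hQ]; exact hf) with hf1 | hf2
      · exact hf1
      · exfalso
        have h' := h2 f hf2
        rw [hdir, hbd, Bool.not_not] at h'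
        exact absurd h' (by cases e.horiz <;> simp)
    have hL1 : L1 ≠ [] := List.ne_nil_of_mem hf1
    have hL2 : L2 ≠ [] := List.ne_nil_of_mem he2
    have hrev : (L1 ++ L2).reverse = L2.reverse ++ L1.reverse := (List.reverse_append)
    have hndR : (L2.reverse ++ L1.reverse).Nodup := by
      rw [← hrev]; exact List.nodup_reverse.mpr hnd
    have hchR : (L2.reverse ++ L1.reverse).Chain' GridEdge.adj := by
      rw [← hrev]
      exact List.isChain_reverse.mpr (hch.imp fun a b h => adj_symm h)
    have hsimR : Sim (L2.reverse ++ L1.reverse) := by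
      rw [← hrev]; exact Sim_reverse hsim
    have hrun : ∀ x ∈ L2.reverse, x.horiz = e.horiz := by
      intro x hx
      have := h2 x (List.mem_reverse.mp hx); rw [hbd] at this
      rw [this]; cases e.horiz <;> simp
    have hrun2 : ∀ x ∈ L1.reverse, x.horiz = !e.horiz := by
      intro x hx; rw [h1 x (List.mem_reverse.mp hx), hbd]
    have hdd1 : ∀ x ∈ L1, ∀ y ∈ L1, x.horiz = y.horiz :=
      fun x hx y hy => by rw [h1 x hx, h1 y hy]
    have hγ : ∀ f' ∈ L1.reverse, cross f' = cross f :=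
      fun f' hf' => runcross L1 (List.isChain_append.mp hch).1 hdd1 f'
        (List.mem_reverse.mp hf') f hf1
    have hcore := S3core L2.reverse L1.reverse e.horiz hndR hchR hsimR hrun hrun2
      (by simp [hL2]) (by simp [hL1]) (cross f) hγ
    have hmem : ∀ g ∈ Q.edges, g.horiz = e.horiz → g ∈ L2.reverse := by
      intro g hg hgd
      rw [List.mem_reverse]
      rcases List.mem_append.mp (by rw [← hQ]; exact hg) with h | h
      · exfalso; have h' := h1 g h; rw [hgd, hbd] at h'; exact absurd h' (by cases e.horiz <;> simp)
      · exact h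
    have hdd2 : ∀ x ∈ L2, ∀ y ∈ L2, x.horiz = y.horiz :=
      fun x hx y hy => by rw [h2 x hx, h2 y hy]
    have hcr2 := runcross L2 (List.isChain_append.mp hch).2.1 hdd2
    rcases hcore with ⟨hside, c, hc, hcγ⟩ | ⟨hside, c, hc, hcγ⟩
    · left
      refine ⟨fun g hg hgd => hside g (hmem g hg hgd), ?_⟩
      have : c = mkE e.horiz (cross f) (cross e) := ext_edge
        (by rw [mkE_horiz]; exact hrun c hc) (by rw [hcγ, mkE_along])
        (by rw [mkE_cross]; exact hcr2 c (List.mem_reverse.mp hc) e he2)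
      rw [← this, hQ]
      exact List.mem_append.mpr (Or.inr (List.mem_reverse.mp hc))
    · right
      refine ⟨fun g hg hgd => hside g (hmem g hg hgd), ?_⟩
      have : c = mkE e.horiz (cross f - 1) (cross e) := ext_edge
        (by rw [mkE_horiz]; exact hrun c hc) (by rw [hcγ, mkE_along])
        (by rw [mkE_cross]; exact hcr2 c (List.mem_reverse.mp hc) e he2)
      rw [← this, hQ]
      exact List.mem_append.mpr (Or.inr (List.mem_reverse.mp hc))

end GE

namespace GE

lemma bool_ne_not {a b : Bool} (h : a ≠ b) : a = !b := by
  cases a <;> cases b <;> simp_all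

lemma bool_eq_or (a b : Bool) : a = b ∨ a = !b := by
  cases a <;> cases b <;> simp

/-- the "equal orientation" contradiction -/
lemma EQL (A A' B B' : GridPath) (hbA : A.bends ≤ 1) (hbB : B.bends ≤ 1)
    (hAA' : ∀ e ∈ A.edges, e ∉ A'.edges) (hBB' : ∀ e ∈ B.edges, e ∉ B'.edges)
    (E1 E2 f g : GridEdge)
    (hd2 : E2.horiz = !E1.horiz) (hdf : f.horiz = E1.horiz) (hdg : g.horiz = E1.horiz)
    (hE1A : E1 ∈ A.edges) (hE1B : E1 ∈ B.edges) (hE2A : E2 ∈ A.edges)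
    (hE2B : E2 ∈ B.edges) (hfA' : f ∈ A'.edges) (hfB : f ∈ B.edges)
    (hgA : g ∈ A.edges) (hgB' : g ∈ B'.edges) : False := by
  have hcf : cross f = cross E1 := S1 B hbB hfB hE1B hdf
  have hcg : cross g = cross E1 := S1 A hbA hgA hE1A hdg
  have hfnA : f ∉ A.edges := fun h => hAA' f h hfA'
  have hgnB : g ∉ B.edges := fun h => hBB' g h hgB'
  rcases S3 A hbA hE1A hE2A hd2 with ⟨hsA, hcA⟩ | ⟨hsA, hcA⟩ <;>
    rcases S3 B hbB hE1B hE2B hd2 with ⟨hsB, hcB⟩ | ⟨hsB, hcB⟩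
  · -- both on the ≥ side of the corner
    have hf1 : cross E2 ≤ along f := hsB f hfB hdf
    have hg1 : cross E2 ≤ along g := hsA g hgA hdg
    rcases le_total (along f) (along g) with h | h
    · apply hfnA
      have hm := S2 A hbA hcA hgA (by rw [mkE_horiz, hdg]) (z := along f)
        (by rw [mkE_along]; exact hf1) h
      rw [mkE_horiz, mkE_cross] at hm
      have : f = mkE E1.horiz (along f) (cross E1) := ext_edge (by rw [mkE_horiz, hdf])
        (by rw [mkE_along]) (by rw [mkE_cross, hcf])
      rw [this]; exact hm
    · apply hgnB
      have hm := S2 B hbB hcB hfB (by rw [mkE_horiz, hdf]) (z := along g)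
        (by rw [mkE_along]; exact hg1) h
      rw [mkE_horiz, mkE_cross] at hm
      have : g = mkE E1.horiz (along g) (cross E1) := ext_edge (by rw [mkE_horiz, hdg])
        (by rw [mkE_along]) (by rw [mkE_cross, hcg])
      rw [this]; exact hm
  · have h1 : cross E2 ≤ along E1 := hsA E1 hE1A rfl
    have h2 : along E1 ≤ cross E2 - 1 := hsB E1 hE1B rfl
    omega
  · have h1 : cross E2 ≤ along E1 := hsB E1 hE1B rfl
    have h2 : along E1 ≤ cross E2 - 1 := hsA E1 hE1A rfl
    omega
  · -- both on the ≤ side of the corner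
    have hf1 : along f ≤ cross E2 - 1 := hsB f hfB hdf
    have hg1 : along g ≤ cross E2 - 1 := hsA g hgA hdg
    rcases le_total (along g) (along f) with h | h
    · apply hfnA
      have hm := S2 A hbA hgA hcA (by rw [mkE_horiz, hdg]) (z := along f) h
        (by rw [mkE_along]; exact hf1)
      rw [hdg] at hm
      have : f = mkE E1.horiz (along f) (cross g) := ext_edge (by rw [mkE_horiz, hdf])
        (by rw [mkE_along]) (by rw [mkE_cross, hcf, hcg])
      rw [this]; exact hm
    · apply hgnB
      have hm := S2 B hbB hfB hcB (by rw [mkE_horiz, hdf]) (z := along g) h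
        (by rw [mkE_along]; exact hg1)
      rw [hdf] at hm
      have : g = mkE E1.horiz (along g) (cross f) := ext_edge (by rw [mkE_horiz, hdg])
        (by rw [mkE_along]) (by rw [mkE_cross, hcg, hcf])
      rw [this]; exact hm

/-- the "mixed orientation" contradiction -/
lemma MIX (O O' A B : GridPath) (hbO : O.bends ≤ 1) (hbO' : O'.bends ≤ 1)
    (hbA : A.bends ≤ 1) (hbB : B.bends ≤ 1)
    (hOO' : ∀ e ∈ O.edges, e ∉ O'.edges)
    (es et eu eu' ew' : GridEdge)
    (hdt : et.horiz = !es.horiz) (hdu : eu.horiz = !es.horiz)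
    (hdu' : eu'.horiz = !es.horiz) (hdw' : ew'.horiz = es.horiz)
    (hesO : es ∈ O.edges) (hesA : es ∈ A.edges) (hetA : et ∈ A.edges)
    (hetB : et ∈ B.edges) (heuO : eu ∈ O.edges) (heuB : eu ∈ B.edges)
    (heuO' : eu' ∈ O'.edges) (heuB' : eu' ∈ B.edges)
    (hewO' : ew' ∈ O'.edges) (hewA : ew' ∈ A.edges) : False := by
  have hcu : cross eu = cross et := S1 B hbB heuB hetB (by rw [hdu, hdt])
  have hcu' : cross eu' = cross et := S1 B hbB heuB' hetB (by rw [hdu', hdt])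
  have hcw' : cross ew' = cross es := S1 A hbA hewA hesA hdw'
  have hSO := S3 O hbO hesO heuO hdu
  have hSO' := S3 O' hbO' hewO' heuO' (by rw [hdu', hdw'])
  rcases S3 A hbA hesA hetA hdt with ⟨hsA, _⟩ | ⟨hsA, _⟩
  · have h1 : cross et ≤ along es := hsA es hesA rfl
    have h2 : cross et ≤ along ew' := hsA ew' hewA hdw'
    rcases hSO with ⟨hsO, hcO⟩ | ⟨hsO, _⟩
    · rcases hSO' with ⟨hsO', hcO'⟩ | ⟨hsO', _⟩
      · apply hOO' _ hcO
        have : mkE es.horiz (cross eu) (cross es) = mkE ew'.horiz (cross eu') (cross ew') := by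
          rw [hdw', hcu, hcu', hcw']
        rw [this]; exact hcO'
      · have := hsO' ew' hewO' rfl
        rw [hcu'] at this; omega
    · have := hsO es hesO rfl
      rw [hcu] at this; omega
  · have h1 : along es ≤ cross et - 1 := hsA es hesA rfl
    have h2 : along ew' ≤ cross et - 1 := hsA ew' hewA hdw'
    rcases hSO with ⟨hsO, _⟩ | ⟨hsO, hcO⟩
    · have := hsO es hesO rfl
      rw [hcu] at this; omega
    · rcases hSO' with ⟨hsO', _⟩ | ⟨hsO', hcO'⟩
      · have := hsO' ew' hewO' rfl
        rw [hcu'] at this; omega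
      · apply hOO' _ hcO
        have : mkE es.horiz (cross eu - 1) (cross es) =
            mkE ew'.horiz (cross eu' - 1) (cross ew') := by
          rw [hdw', hcu, hcu', hcw']
        rw [this]; exact hcO'

end GE

/-- Two paths (edge-)intersect when they share a grid edge. -/
def GridPath.Inter (P Q : GridPath) : Prop :=
  ∃ e : GridEdge, e ∈ P.edges ∧ e ∈ Q.edges

/-- A relevant edge of a path: an extremity (first or last) edge or a bend edge. -/
def GridPath.IsRelevant (P : GridPath) (e : GridEdge) : Prop :=
  P.edges.head? = some e ∨ P.edges.getLast? = some e ∨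
    ∃ q ∈ P.edges.zip P.edges.tail, q.1.horiz ≠ q.2.horiz ∧ (e = q.1 ∨ e = q.2)

/-- An EPG representation of a graph: vertices are assigned grid paths, and two
distinct vertices are adjacent iff their paths share a grid edge. -/
def IsEPGRep {V : Type*} (G : SimpleGraph V) (P : V → GridPath) : Prop :=
  ∀ u v : V, u ≠ v → (G.Adj u v ↔ (P u).Inter (P v))

/-- The Helly property for a family of grid paths: every pairwise
edge-intersecting subfamily has a grid edge common to all its members. -/
def HellyEPG {ι : Type*} (P : ι → GridPath) : Prop :=
  ∀ T : Set ι, (∀ i ∈ T, ∀ j ∈ T, (P i).Inter (P j)) →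
    ∃ e : GridEdge, ∀ i ∈ T, e ∈ (P i).edges

/-- The set of maximal cliques of a graph. -/
def maxCliques {V : Type*} (G : SimpleGraph V) : Set (Set V) :=
  {s | G.IsClique s ∧ ∀ t : Set V, G.IsClique t → s ⊆ t → s = t}

/-- The octahedral graph `O₃ = K_{2,2,2}`: the complete tripartite graph with
three parts of size two. -/
def octahedron : SimpleGraph (Fin 3 × Fin 2) :=
  SimpleGraph.fromRel (fun a b => a.1 ≠ b.1)

open GE

/-- `O₃` is not a Helly `B₁`-EPG graph: in every single-bend EPG representation
of it there are three pairwise intersecting paths with no common grid edge. -/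
theorem octahedron_not_helly_B1 (P : Fin 3 × Fin 2 → GridPath)
    (hrep : IsEPGRep octahedron P) (hb : ∀ v, (P v).bends ≤ 1) :
    ∃ u v w : Fin 3 × Fin 2, u ≠ v ∧ u ≠ w ∧ v ≠ w ∧
      (P u).Inter (P v) ∧ (P u).Inter (P w) ∧ (P v).Inter (P w) ∧
      ¬ ∃ e : GridEdge, e ∈ (P u).edges ∧ e ∈ (P v).edges ∧ e ∈ (P w).edges := by
  by_contra hcon
  push_neg at hcon
  -- basic graph facts
  have hI : ∀ (i j : Fin 3) (a b : Fin 2), i ≠ j → (P (i, a)).Inter (P (j, b)) := by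
    intro i j a b hij
    refine (hrep (i, a) (j, b) (by simp [Prod.ext_iff, hij])).mp ?_
    rw [octahedron, SimpleGraph.fromRel_adj]
    exact ⟨by simp [Prod.ext_iff, hij], Or.inl (by simpa using hij)⟩
  have hdisj : ∀ (i : Fin 3) (b : Fin 2) (e : GridEdge),
      e ∈ (P (i, b)).edges → e ∈ (P (i, 1 - b)).edges → False := by
    intro i b e h1 h2
    have hne : ((i, b) : Fin 3 × Fin 2) ≠ (i, 1 - b) := by
      have hb2 : b ≠ 1 - b := by fin_cases b <;> decide
      intro hc
      exact hb2 (congrArg Prod.snd hc)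
    have hna : ¬ octahedron.Adj (i, b) (i, 1 - b) := by
      rw [octahedron, SimpleGraph.fromRel_adj]
      rintro ⟨-, h | h⟩ <;> exact h rfl
    exact hna ((hrep _ _ hne).mpr ⟨e, h1, h2⟩)
  -- clique edges
  have hEex : ∀ s : Fin 3 → Fin 2, ∃ e : GridEdge, e ∈ (P (0, s 0)).edges ∧
      e ∈ (P (1, s 1)).edges ∧ e ∈ (P (2, s 2)).edges := by
    intro s
    exact hcon (0, s 0) (1, s 1) (2, s 2)
      (by simp [Prod.ext_iff]) (by simp [Prod.ext_iff]) (by simp [Prod.ext_iff])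
      (hI 0 1 _ _ (by decide)) (hI 0 2 _ _ (by decide)) (hI 1 2 _ _ (by decide))
  choose E hE0 hE1 hE2 using hEex
  have hEm : ∀ (s : Fin 3 → Fin 2) (i : Fin 3), E s ∈ (P (i, s i)).edges := by
    intro s i
    fin_cases i
    exacts [hE0 s, hE1 s, hE2 s]
  have hmem' : ∀ (m : Fin 3 → Fin 2) (c : Fin 3) (b : Fin 2), m c = b →
      E m ∈ (P (c, b)).edges := fun m c b hcb => hcb ▸ hEm m c
  by_cases hconst : ∀ s t : Fin 3 → Fin 2, (E s).horiz = (E t).horiz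
  · -- all clique edges in the same direction
    have hc : ∀ a b : Fin 2, cross (E ![a, b, 0]) = cross (E ![0, 0, 0]) := by
      intro a b
      exact S1 (P (2, 0)) (hb _) (hmem' ![a, b, 0] 2 0 rfl) (hmem' ![0, 0, 0] 2 0 rfl)
        (hconst _ _)
    have nb : ∀ (sa sb t : Fin 3 → Fin 2) (i : Fin 3), sa i = sb i → t i = 1 - sa i →
        cross (E t) = cross (E sa) →
        ¬ (along (E sa) ≤ along (E t) ∧ along (E t) ≤ along (E sb)) := by
      rintro sa sb t i hab hti hcr ⟨hle1, hle2⟩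
      have h1 : E sa ∈ (P (i, sa i)).edges := hEm sa i
      have h2 : E sb ∈ (P (i, sa i)).edges := hab ▸ hEm sb i
      have hm := S2 (P (i, sa i)) (hb _) h1 h2 (hconst _ _) hle1 hle2
      have hteq : E t = mkE (E sa).horiz (along (E t)) (cross (E sa)) := ext_edge
        (by rw [mkE_horiz]; exact hconst t sa) (by rw [mkE_along]) (by rw [mkE_cross, hcr])
      rw [← hteq] at hm
      exact hdisj i (sa i) (E t) hm (hti ▸ hEm t i)
    have n1 := nb ![0,0,0] ![0,1,0] ![1,0,0] 0 rfl rfl ((hc _ _).trans (hc _ _).symm)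
    have n2 := nb ![0,0,0] ![0,1,0] ![1,1,0] 0 rfl rfl ((hc _ _).trans (hc _ _).symm)
    have n3 := nb ![0,1,0] ![0,0,0] ![1,0,0] 0 rfl rfl ((hc _ _).trans (hc _ _).symm)
    have n4 := nb ![0,1,0] ![0,0,0] ![1,1,0] 0 rfl rfl ((hc _ _).trans (hc _ _).symm)
    have n5 := nb ![1,0,0] ![1,1,0] ![0,0,0] 0 rfl rfl ((hc _ _).trans (hc _ _).symm)
    have n6 := nb ![1,0,0] ![1,1,0] ![0,1,0] 0 rfl rfl ((hc _ _).trans (hc _ _).symm)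
    have n7 := nb ![1,1,0] ![1,0,0] ![0,0,0] 0 rfl rfl ((hc _ _).trans (hc _ _).symm)
    have n8 := nb ![1,1,0] ![1,0,0] ![0,1,0] 0 rfl rfl ((hc _ _).trans (hc _ _).symm)
    have n9 := nb ![0,0,0] ![1,0,0] ![0,1,0] 1 rfl rfl ((hc _ _).trans (hc _ _).symm)
    have n10 := nb ![0,0,0] ![1,0,0] ![1,1,0] 1 rfl rfl ((hc _ _).trans (hc _ _).symm)
    have n11 := nb ![1,0,0] ![0,0,0] ![0,1,0] 1 rfl rfl ((hc _ _).trans (hc _ _).symm)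
    have n12 := nb ![1,0,0] ![0,0,0] ![1,1,0] 1 rfl rfl ((hc _ _).trans (hc _ _).symm)
    have n13 := nb ![0,1,0] ![1,1,0] ![0,0,0] 1 rfl rfl ((hc _ _).trans (hc _ _).symm)
    have n14 := nb ![0,1,0] ![1,1,0] ![1,0,0] 1 rfl rfl ((hc _ _).trans (hc _ _).symm)
    have n15 := nb ![1,1,0] ![0,1,0] ![0,0,0] 1 rfl rfl ((hc _ _).trans (hc _ _).symm)
    have n16 := nb ![1,1,0] ![0,1,0] ![1,0,0] 1 rfl rfl ((hc _ _).trans (hc _ _).symm)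
    omega
  · -- some flip changes the direction
    push_neg at hconst
    obtain ⟨s0, t0, hst⟩ := hconst
    have hstep : ∃ (s : Fin 3 → Fin 2) (i : Fin 3),
        (E (Function.update s i (1 - s i))).horiz ≠ (E s).horiz := by
      by_contra hno
      push_neg at hno
      have hupd : ∀ (s : Fin 3 → Fin 2) (i : Fin 3) (c : Fin 2),
          (E (Function.update s i c)).horiz = (E s).horiz := by
        intro s i c
        rcases eq_or_ne c (s i) with rfl | hne
        · rw [Function.update_eq_self]
        · have hgen : ∀ a b : Fin 2, a ≠ b → a = 1 - b := by decide
          rw [hgen c (s i) hne]; exact hno s i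
      apply hst
      have e0 : (E (Function.update s0 0 (t0 0))).horiz = (E s0).horiz := hupd s0 0 _
      have e1 : (E (Function.update (Function.update s0 0 (t0 0)) 1 (t0 1))).horiz
          = (E (Function.update s0 0 (t0 0))).horiz := hupd _ 1 _
      have e2 : (E (Function.update (Function.update (Function.update s0 0 (t0 0)) 1 (t0 1)) 2 (t0 2))).horiz
          = (E (Function.update (Function.update s0 0 (t0 0)) 1 (t0 1))).horiz := hupd _ 2 _
      have ht : Function.update (Function.update (Function.update s0 0 (t0 0)) 1 (t0 1)) 2 (t0 2) = t0 := by
        funext j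
        fin_cases j <;> simp [Function.update]
      rw [ht] at e2
      rw [e2, e1, e0]
    obtain ⟨s, i, hflip⟩ := hstep
    obtain ⟨j, k, hij, hik, hjk⟩ : ∃ j k : Fin 3, i ≠ j ∧ i ≠ k ∧ j ≠ k := by
      fin_cases i
      exacts [⟨1, 2, by decide, by decide, by decide⟩,
        ⟨0, 2, by decide, by decide, by decide⟩,
        ⟨0, 1, by decide, by decide, by decide⟩]
    set t := Function.update s i (1 - s i) with htdef
    set u := Function.update s j (1 - s j) with hudef
    set u' := Function.update u i (1 - u i) with hu'def
    set w := Function.update s k (1 - s k) with hwdef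
    set w' := Function.update w i (1 - w i) with hw'def
    -- coordinate evaluations
    have hui : u i = s i := Function.update_of_ne hij _ _
    have huj : u j = 1 - s j := Function.update_self _ _ _
    have huk : u k = s k := Function.update_of_ne hjk.symm _ _
    have hu'i : u' i = 1 - s i := by rw [hu'def, Function.update_self, hui]
    have hu'j : u' j = 1 - s j := by rw [hu'def, Function.update_of_ne hij.symm, huj]
    have hu'k : u' k = s k := by rw [hu'def, Function.update_of_ne hik.symm, huk]
    have hti : t i = 1 - s i := Function.update_self _ _ _
    have htj : t j = s j := Function.update_of_ne hij.symm _ _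
    have htk : t k = s k := Function.update_of_ne hik.symm _ _
    have hwi : w i = s i := Function.update_of_ne hik _ _
    have hwj : w j = s j := Function.update_of_ne hjk _ _
    have hwk : w k = 1 - s k := Function.update_self _ _ _
    have hw'i : w' i = 1 - s i := by rw [hw'def, Function.update_self, hwi]
    have hw'j : w' j = s j := by rw [hw'def, Function.update_of_ne hij.symm, hwj]
    have hw'k : w' k = 1 - s k := by rw [hw'def, Function.update_of_ne hik.symm, hwk]
    -- paths
    have hdt : (E t).horiz = !(E s).horiz := bool_ne_not hflip
    -- disjointness
    have hdisjO : ∀ e ∈ (P (i, s i)).edges, e ∉ (P (i, 1 - s i)).edges :=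
      fun e he he' => hdisj i (s i) e he he'
    have hdisjA : ∀ e ∈ (P (j, s j)).edges, e ∉ (P (j, 1 - s j)).edges :=
      fun e he he' => hdisj j (s j) e he he'
    have hdisjB : ∀ e ∈ (P (k, s k)).edges, e ∉ (P (k, 1 - s k)).edges :=
      fun e he he' => hdisj k (s k) e he he'
    -- the equal-orientation case is impossible
    have key : ∀ m n : Fin 3 → Fin 2, E m ∈ (P (j, 1 - s j)).edges →
        E m ∈ (P (k, s k)).edges → E n ∈ (P (j, s j)).edges →
        E n ∈ (P (k, 1 - s k)).edges → (E m).horiz ≠ (E n).horiz := by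
      intro m n hm1 hm2 hn1 hn2 hmn
      rcases bool_eq_or (E m).horiz (E s).horiz with hδ | hδ
      · exact EQL (P (j, s j)) (P (j, 1 - s j)) (P (k, s k)) (P (k, 1 - s k))
          (hb _) (hb _) hdisjA hdisjB (E s) (E t) (E m) (E n) hdt hδ (hmn ▸ hδ)
          (hmem' s j _ rfl) (hmem' s k _ rfl) (hmem' t j _ htj) (hmem' t k _ htk)
          hm1 hm2 hn1 hn2
      · have hδ' : (E m).horiz = (E t).horiz := by rw [hδ, hdt]
        refine EQL (P (j, s j)) (P (j, 1 - s j)) (P (k, s k)) (P (k, 1 - s k))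
          (hb _) (hb _) hdisjA hdisjB (E t) (E s) (E m) (E n) ?_ hδ' (hmn ▸ hδ')
          (hmem' t j _ htj) (hmem' t k _ htk) (hmem' s j _ rfl) (hmem' s k _ rfl)
          hm1 hm2 hn1 hn2
        rw [hdt, Bool.not_not]
    have h1 := key u w (hmem' u j _ huj) (hmem' u k _ huk) (hmem' w j _ hwj)
      (hmem' w k _ hwk)
    have h2 := key u w' (hmem' u j _ huj) (hmem' u k _ huk) (hmem' w' j _ hw'j)
      (hmem' w' k _ hw'k)
    have h3 := key u' w (hmem' u' j _ hu'j) (hmem' u' k _ hu'k) (hmem' w j _ hwj)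
      (hmem' w k _ hwk)
    have h4 := key u' w' (hmem' u' j _ hu'j) (hmem' u' k _ hu'k) (hmem' w' j _ hw'j)
      (hmem' w' k _ hw'k)
    rcases bool_eq_or (E u).horiz (E s).horiz with hou | hou
    · -- E u has direction d : use MIX with the roles of A and B swapped
      have how : (E w).horiz = !(E s).horiz := by
        have := bool_ne_not (Ne.symm h1); rw [this, hou]
      have how' : (E w').horiz = !(E s).horiz := by
        have := bool_ne_not (Ne.symm h2); rw [this, hou]
      have hou' : (E u').horiz = (E s).horiz := by
        have := bool_ne_not h3; rw [this, how, Bool.not_not]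
      exact MIX (P (i, s i)) (P (i, 1 - s i)) (P (k, s k)) (P (j, s j))
        (hb _) (hb _) (hb _) (hb _) hdisjO
        (E s) (E t) (E w) (E w') (E u')
        hdt how how' hou'
        (hmem' s i _ rfl) (hmem' s k _ rfl) (hmem' t k _ htk) (hmem' t j _ htj)
        (hmem' w i _ hwi) (hmem' w j _ hwj) (hmem' w' i _ hw'i) (hmem' w' j _ hw'j)
        (hmem' u' i _ hu'i) (hmem' u' k _ hu'k)
    · -- E u has direction !d : use MIX directly
      have hou2 : (E u).horiz = !(E s).horiz := hou
      have how : (E w).horiz = (E s).horiz := by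
        have := bool_ne_not (Ne.symm h1); rw [this, hou2, Bool.not_not]
      have hou' : (E u').horiz = !(E s).horiz := by
        have := bool_ne_not h3; rw [this, how]
      have how' : (E w').horiz = (E s).horiz := by
        have := bool_ne_not (Ne.symm h4); rw [this, hou', Bool.not_not]
      exact MIX (P (i, s i)) (P (i, 1 - s i)) (P (j, s j)) (P (k, s k))
        (hb _) (hb _) (hb _) (hb _) hdisjO
        (E s) (E t) (E u) (E u') (E w')
        hdt hou2 hou' how'
        (hmem' s i _ rfl) (hmem' s j _ rfl) (hmem' t j _ htj) (hmem' t k _ htk)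
        (hmem' u i _ hui) (hmem' u k _ huk) (hmem' u' i _ hu'i) (hmem' u' k _ hu'k)
        (hmem' w' i _ hw'i) (hmem' w' j _ hw'j)
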